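/- Let Δ₁ ⊆ Δ₂ ⊆ ℝ² be two-dimensional reflexive polytopes. Then for any pair of adjacent lattice points w₁, w₂ lying on a common edge of Δ₂ (i.e., w₁, w₂ ∈ ℤ², the segment [w₁,w₂] is contained in the boundary of Δ₂, and [w₁,w₂] ∩ ℤ² = {w₁,w₂}), there exist adjacent lattice points v₁, v₂ lying on a common edge of Δ₁ (i.e., v₁, v₂ ∈ ℤ², [v₁,v₂] ⊆ ∂Δ₁, [v₁,v₂] ∩ ℤ² = {v₁,v₂}) such that the cone ℝ₊w₁ + ℝ₊w₂ = {r·w₁ + s·w₂ : r, s ≥ 0} is contained in the cone ℝ₊v₁ + ℝ₊v₂. (This expresses that the unique MPCP subdivision of the face fan of Δ₂ refines the unique MPCP subdivision of the face fan of Δ₁.) -/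

import Mathlib

open Set

/-- A point of `ℝⁿ` is a lattice point if all its coordinates are integers. -/
def IsLatticePoint {n : ℕ} (x : Fin n → ℝ) : Prop := ∀ i, ∃ z : ℤ, x i = (z : ℝ)

/-- A lattice polytope is the convex hull of a finite set of lattice points. -/
def IsLatticePolytope {n : ℕ} (Δ : Set (Fin n → ℝ)) : Prop :=
  ∃ S : Finset (Fin n → ℝ), (∀ x ∈ S, IsLatticePoint x) ∧
    Δ = convexHull ℝ (S : Set (Fin n → ℝ))

/-- The polar dual `Δ* = {m | ⟨m,x⟩ ≥ -1 ∀ x ∈ Δ}`. -/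
def polarDual {n : ℕ} (Δ : Set (Fin n → ℝ)) : Set (Fin n → ℝ) :=
  {m | ∀ x ∈ Δ, -1 ≤ ∑ i, m i * x i}

/-- A reflexive polytope: a lattice polytope with `0` in its interior whose dual
is again a lattice polytope. -/
def IsReflexive {n : ℕ} (Δ : Set (Fin n → ℝ)) : Prop :=
  IsLatticePolytope Δ ∧ (0 : Fin n → ℝ) ∈ interior Δ ∧ IsLatticePolytope (polarDual Δ)

/-- The cone `ℝ₊v₁ + ℝ₊v₂`. -/
def coneOver2 {n : ℕ} (v₁ v₂ : Fin n → ℝ) : Set (Fin n → ℝ) :=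
  {x | ∃ r s : ℝ, 0 ≤ r ∧ 0 ≤ s ∧ x = r • v₁ + s • v₂}

namespace MPCP

abbrev E := Fin 2 → ℝ

noncomputable def dot (m x : E) : ℝ := ∑ i, m i * x i

lemma dot_eq (m x : E) : dot m x = m 0 * x 0 + m 1 * x 1 := by
  simp [dot, Fin.sum_univ_two]

noncomputable def Ddet (x y : E) : ℝ := x 0 * y 1 - x 1 * y 0

lemma Ddet_linear (u : E) : IsLinearMap ℝ (fun x => Ddet u x) := by
  constructor <;> intros <;>
    simp only [Ddet, Pi.add_apply, Pi.smul_apply, smul_eq_mul] <;> ring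

lemma Ddet_linear' (u : E) : IsLinearMap ℝ (fun x => Ddet x u) := by
  constructor <;> intros <;>
    simp only [Ddet, Pi.add_apply, Pi.smul_apply, smul_eq_mul] <;> ring

lemma dot_linear (p : E) : IsLinearMap ℝ (fun z => dot z p) := by
  constructor <;> intros <;>
    simp only [dot_eq, Pi.add_apply, Pi.smul_apply, smul_eq_mul] <;> ring

lemma dot_linear' (p : E) : IsLinearMap ℝ (fun z => dot p z) := by
  constructor <;> intros <;>
    simp only [dot_eq, Pi.add_apply, Pi.smul_apply, smul_eq_mul] <;> ring

lemma lat_pair {x : E} (h : IsLatticePoint x) : ∃ a b : ℤ, x 0 = (a : ℝ) ∧ x 1 = (b : ℝ) := by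
  obtain ⟨a, ha⟩ := h 0; obtain ⟨b, hb⟩ := h 1; exact ⟨a, b, ha, hb⟩

lemma Ddet_int {x y : E} (hx : IsLatticePoint x) (hy : IsLatticePoint y) :
    ∃ z : ℤ, Ddet x y = (z : ℝ) := by
  obtain ⟨a, b, ha, hb⟩ := lat_pair hx
  obtain ⟨c, d, hc, hd⟩ := lat_pair hy
  exact ⟨a * d - b * c, by simp [Ddet, ha, hb, hc, hd]⟩

lemma dot_int {x y : E} (hx : IsLatticePoint x) (hy : IsLatticePoint y) :
    ∃ z : ℤ, dot x y = (z : ℝ) := by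
  obtain ⟨a, b, ha, hb⟩ := lat_pair hx
  obtain ⟨c, d, hc, hd⟩ := lat_pair hy
  exact ⟨a * c + b * d, by simp [dot_eq, ha, hb, hc, hd]⟩

lemma lat_add {x y : E} (hx : IsLatticePoint x) (hy : IsLatticePoint y) :
    IsLatticePoint (x + y) := by
  intro i; obtain ⟨a, ha⟩ := hx i; obtain ⟨b, hb⟩ := hy i
  exact ⟨a + b, by simp [ha, hb]⟩

lemma lat_zsmul (a : ℤ) {x : E} (hx : IsLatticePoint x) : IsLatticePoint ((a : ℝ) • x) := by
  intro i; obtain ⟨b, hb⟩ := hx i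
  exact ⟨a * b, by simp [Pi.smul_apply, smul_eq_mul, hb]⟩

lemma lat_neg {x : E} (hx : IsLatticePoint x) : IsLatticePoint (-x) := by
  intro i; obtain ⟨b, hb⟩ := hx i
  exact ⟨-b, by simp [Pi.neg_apply, hb]⟩

lemma int_one_le {x : ℝ} (h : ∃ z : ℤ, x = (z : ℝ)) (hx : 0 < x) : 1 ≤ x := by
  obtain ⟨z, rfl⟩ := h
  have : 0 < z := by exact_mod_cast hx
  exact_mod_cast this

lemma int_two_le {x : ℝ} (h : ∃ z : ℤ, x = (z : ℝ)) (hx : 1 < x) : 2 ≤ x := by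
  obtain ⟨z, rfl⟩ := h
  have : 1 < z := by exact_mod_cast hx
  have : 2 ≤ z := by omega
  exact_mod_cast this

lemma int_zero_or_one {x : ℝ} (h : ∃ z : ℤ, x = (z : ℝ)) (h0 : 0 ≤ x) (h1 : x ≤ 1) :
    x = 0 ∨ x = 1 := by
  obtain ⟨z, rfl⟩ := h
  have hz0 : 0 ≤ z := by exact_mod_cast h0
  have hz1 : z ≤ 1 := by exact_mod_cast h1
  interval_cases z <;> simp

/-- Cramer identity (unconditional, scaled form). -/
lemma cramer (a b v : E) : Ddet a b • v = Ddet v b • a + Ddet a v • b := by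
  funext i
  fin_cases i <;>
    simp only [Ddet, Pi.add_apply, Pi.smul_apply, smul_eq_mul, Fin.isValue, Fin.mk_zero,
      Fin.mk_one] <;> ring

lemma cramer1 {a b : E} (h : Ddet a b = 1) (v : E) : v = Ddet v b • a + Ddet a v • b := by
  have := cramer a b v
  rwa [h, one_smul] at this

/-- Plücker: expansion of `Ddet x y` in coordinates w.r.t. a basis. -/
lemma pluecker (a b x y : E) :
    Ddet x y * Ddet a b = Ddet x b * Ddet a y - Ddet a x * Ddet y b := by
  simp only [Ddet]; ring

lemma hull_le {S : Finset E} {f : E → ℝ} (hf : IsLinearMap ℝ f) {c : ℝ}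
    (h : ∀ x ∈ S, f x ≤ c) :
    ∀ x ∈ convexHull ℝ (S : Set E), f x ≤ c := by
  intro x hx
  exact convexHull_min h (convex_halfSpace_le hf c) hx

/-- A nonzero linear functional cannot be `≤ 0` on a set having `0` in its interior. -/
lemma pos_span {A : Set E} (h0 : (0:E) ∈ interior A) {f : E → ℝ} (hf : IsLinearMap ℝ f)
    (x₀ : E) (hx₀ : 0 < f x₀) (hle : ∀ x ∈ A, f x ≤ 0) : False := by
  have hcont : ContinuousAt (fun t : ℝ => t • x₀) 0 :=
    (continuous_id.smul continuous_const).continuousAt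
  have hmem : interior A ∈ nhds ((fun t : ℝ => t • x₀) 0) := by
    simp only [zero_smul]
    exact isOpen_interior.mem_nhds h0
  have hev := hcont.preimage_mem_nhds hmem
  obtain ⟨ε, hε, hball⟩ := Metric.mem_nhds_iff.1 hev
  have hmem2 : (ε/2 : ℝ) ∈ Metric.ball (0:ℝ) ε := by
    simp only [Metric.mem_ball, Real.dist_eq, sub_zero]
    rw [abs_of_pos (by linarith)]; linarith
  have : (ε/2) • x₀ ∈ interior A := hball hmem2
  have h3 := hle _ (interior_subset this)
  rw [hf.map_smul, smul_eq_mul] at h3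
  nlinarith

/-- Lattice points in a bounded subset of the plane form a finite set. -/
lemma finite_lattice {A : Set E} (hA : Bornology.IsBounded A) :
    {x ∈ A | IsLatticePoint x}.Finite := by
  obtain ⟨C, hC⟩ := isBounded_iff_forall_norm_le.1 hA
  set N : ℤ := ⌈C⌉ with hN
  apply Set.Finite.subset (Set.Finite.image (f := fun p : ℤ × ℤ => (![(p.1:ℝ), (p.2:ℝ)] : E))
    (Finset.Icc (-N) N ×ˢ Finset.Icc (-N) N).finite_toSet)
  rintro x ⟨hxA, hxl⟩
  obtain ⟨a, b, ha, hb⟩ := lat_pair hxl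
  have hbound : ∀ i : Fin 2, |x i| ≤ (N : ℝ) := by
    intro i
    calc |x i| = ‖x i‖ := (Real.norm_eq_abs _).symm
    _ ≤ ‖x‖ := norm_le_pi_norm x i
    _ ≤ C := hC x hxA
    _ ≤ (N : ℝ) := Int.le_ceil C
  refine ⟨(a, b), ?_, ?_⟩
  · have h0 := hbound 0; have h1 := hbound 1
    rw [ha] at h0; rw [hb] at h1
    rw [abs_le] at h0 h1
    simp only [Finset.coe_product, Set.mem_prod, Finset.mem_coe, Finset.mem_Icc]
    exact ⟨⟨by exact_mod_cast h0.1, by exact_mod_cast h0.2⟩,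
      ⟨by exact_mod_cast h1.1, by exact_mod_cast h1.2⟩⟩
  · funext i
    fin_cases i <;> simp [ha, hb]

/-- Supporting lattice functional at a frontier point of a reflexive polytope. -/
lemma supp {Δ : Set E} (h : IsReflexive Δ) {p : E} (hp : p ∈ frontier Δ) :
    ∃ m : E, IsLatticePoint m ∧ (∀ x ∈ Δ, -1 ≤ dot m x) ∧ dot m p = -1 := by
  obtain ⟨S, hSlat, hSeq⟩ := h.1
  have hconv : Convex ℝ Δ := hSeq ▸ convex_convexHull ℝ _
  have hclosed : IsClosed Δ := hSeq ▸ (S.finite_toSet.isCompact_convexHull ℝ).isClosed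
  have h0 : (0:E) ∈ interior Δ := h.2.1
  have hpΔ : p ∈ Δ := by
    have h1 : p ∈ closure Δ := frontier_subset_closure hp
    rwa [hclosed.closure_eq] at h1
  have hpint : p ∉ interior Δ := by
    intro hcon
    rw [frontier, mem_diff] at hp
    exact hp.2 hcon
  obtain ⟨f, hf⟩ := geometric_hahn_banach_open_point hconv.interior isOpen_interior hpint
  have hfp0 : 0 < f p := by
    have := hf 0 h0
    rwa [map_zero] at this
  have hfle : ∀ a ∈ Δ, f a ≤ f p := by
    intro a ha
    by_contra hgt
    push_neg at hgt
    set b : ℝ := f p / f a with hbdef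
    have hfa0 : 0 < f a := lt_trans hfp0 hgt
    have hb0 : 0 < b := div_pos hfp0 hfa0
    have hb1 : b < 1 := (div_lt_one hfa0).2 hgt
    have hz : (1 - b) • (0:E) + b • a ∈ interior Δ :=
      hconv.combo_interior_self_mem_interior h0 ha (by linarith) hb0.le (by ring)
    have := hf _ hz
    rw [smul_zero, zero_add, map_smul, smul_eq_mul, hbdef, div_mul_cancel₀ _ hfa0.ne'] at this
    exact lt_irrefl _ this
  -- decomposition of f
  have hxdec : ∀ x : E, x = x 0 • (Pi.single 0 1 : E) + x 1 • (Pi.single 1 1 : E) := by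
    intro x
    funext i
    fin_cases i <;> simp
  have hfx : ∀ x : E, f x = x 0 * f (Pi.single 0 1) + x 1 * f (Pi.single 1 1) := by
    intro x
    conv_lhs => rw [hxdec x]
    rw [map_add, map_smul, map_smul]
    simp [smul_eq_mul]
  set mv : E := fun i => -(f (Pi.single i 1)) / f p with hmv
  have hdotmv : ∀ x : E, dot mv x = -(f x) / f p := by
    intro x
    rw [dot_eq, hfx x]
    simp only [hmv]
    ring
  have hmvdual : mv ∈ polarDual Δ := by
    intro x hx
    have h1 : dot mv x = -(f x)/f p := hdotmv x
    rw [dot] at h1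
    rw [h1]
    have h2 : f x / f p ≤ 1 := (div_le_one hfp0).2 (hfle x hx)
    rw [neg_div]
    linarith
  obtain ⟨M, hMlat, hMeq⟩ := h.2.2
  have hex : ∃ y ∈ M, dot y p = -1 := by
    by_contra hcon
    push_neg at hcon
    have hforall : ∀ y ∈ (M : Set E), y ∈ {z : E | -1 < dot z p} := by
      intro y hy
      have hydual : y ∈ polarDual Δ := by
        rw [hMeq]; exact subset_convexHull ℝ (M : Set E) hy
      have h1 : -1 ≤ dot y p := by
        have := hydual p hpΔ
        rw [dot]; exact this
      rcases lt_or_eq_of_le h1 with h2 | h2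
      · exact h2
      · exact absurd h2.symm (hcon y hy)
    have hsub2 : polarDual Δ ⊆ {z : E | -1 < dot z p} := by
      rw [hMeq]
      exact convexHull_min hforall (convex_halfSpace_gt (dot_linear p) (-1))
    have hmvd := hsub2 hmvdual
    simp only [mem_setOf_eq] at hmvd
    rw [hdotmv p, neg_div, div_self hfp0.ne'] at hmvd
    linarith
  obtain ⟨y, hyM, hyp⟩ := hex
  refine ⟨y, hMlat y hyM, ?_, hyp⟩
  intro x hx
  have hydual : y ∈ polarDual Δ := by rw [hMeq]; exact subset_convexHull ℝ _ hyM
  have := hydual x hx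
  rw [dot]; exact this

/-- The only interior lattice point of a reflexive polytope is 0. -/
lemma interior_lattice_eq_zero {Δ : Set E} (h : IsReflexive Δ) {p : E}
    (hlat : IsLatticePoint p) (hint : p ∈ interior Δ) : p = 0 := by
  by_contra hne
  obtain ⟨S, hSlat, hSeq⟩ := h.1
  have hcomp : IsCompact Δ := hSeq ▸ S.finite_toSet.isCompact_convexHull ℝ
  have hclosed : IsClosed Δ := hcomp.isClosed
  have hpΔ : p ∈ Δ := interior_subset hint
  have hpnorm : 0 < ‖p‖ := norm_pos_iff.2 hne
  obtain ⟨C, hC⟩ := isBounded_iff_forall_norm_le.1 hcomp.isBounded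
  set K : Set ℝ := {t : ℝ | t • p ∈ Δ} with hK
  have hKclosed : IsClosed K :=
    hclosed.preimage (continuous_id.smul continuous_const)
  have hKbdd : Bornology.IsBounded K := by
    rw [isBounded_iff_forall_norm_le]
    refine ⟨C / ‖p‖, fun t ht => ?_⟩
    have h1 := hC _ ht
    rw [norm_smul] at h1
    exact (le_div_iff₀ hpnorm).2 h1
  have hKcomp : IsCompact K := Metric.isCompact_of_isClosed_isBounded hKclosed hKbdd
  have h1K : (1:ℝ) ∈ K := by
    simp only [hK, mem_setOf_eq, one_smul]; exact hpΔ
  set lam := sSup K with hlamdef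
  have hlamK : lam ∈ K := hKcomp.sSup_mem ⟨1, h1K⟩
  have hbig : ∀ μ : ℝ, μ • p ∈ interior Δ → ∃ δ > 0, (μ + δ) ∈ K := by
    intro μ hμ
    obtain ⟨ε, hε, hball⟩ := Metric.mem_nhds_iff.1 (mem_interior_iff_mem_nhds.1 hμ)
    refine ⟨ε / (2 * ‖p‖), by positivity, ?_⟩
    have hb : (μ + ε/(2*‖p‖)) • p ∈ Metric.ball (μ • p) ε := by
      rw [Metric.mem_ball, dist_eq_norm]
      have h2 : (μ + ε/(2*‖p‖)) • p - μ • p = (ε/(2*‖p‖)) • p := by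
        rw [← sub_smul]; ring_nf
      rw [h2, norm_smul, Real.norm_eq_abs, abs_of_pos (by positivity)]
      rw [div_mul_eq_mul_div, div_lt_iff₀ (by positivity)]
      nlinarith
    have hΔmem : (μ + ε/(2*‖p‖)) • p ∈ Δ := hball hb
    exact hΔmem
  have hlam1 : 1 < lam := by
    obtain ⟨δ, hδ, hmem⟩ := hbig 1 (by simpa using hint)
    have := le_csSup hKbdd.bddAbove hmem
    linarith
  have hfr : lam • p ∈ frontier Δ := by
    rw [frontier, mem_diff]
    constructor
    · rw [hclosed.closure_eq]; exact hlamK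
    · intro hcon
      obtain ⟨δ, hδ, hmem⟩ := hbig lam hcon
      have := le_csSup hKbdd.bddAbove hmem
      linarith
  obtain ⟨m, hmlat, hmge, hmp⟩ := supp h hfr
  have hdml : dot m (lam • p) = lam * dot m p := by
    have := (dot_linear' m).map_smul lam p
    simpa [smul_eq_mul] using this
  have hlampos : 0 < lam := by linarith
  have hdmp : dot m p = -1 / lam := by
    rw [hdml] at hmp
    field_simp
    linarith
  obtain ⟨z, hz⟩ := dot_int hmlat hlat
  have hlt0 : dot m p < 0 := by
    rw [hdmp]; apply div_neg_of_neg_of_pos <;> linarith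
  have hgt : -1 < dot m p := by
    rw [hdmp, neg_div, neg_lt_neg_iff]
    rw [div_lt_one hlampos]
    linarith
  rw [hz] at hgt hlt0
  have hz1 : -1 < z := by exact_mod_cast hgt
  have hz2 : z < 0 := by exact_mod_cast hlt0
  omega


lemma coneOver2_comm {n : ℕ} (a b : Fin n → ℝ) : coneOver2 a b = coneOver2 b a := by
  ext x
  constructor <;> rintro ⟨r, s, hr, hs, rfl⟩ <;> exact ⟨s, r, hs, hr, add_comm _ _⟩

lemma edge_facet {Δ : Set E} (h : IsReflexive Δ) {w₁ w₂ : E}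
    (hseg : segment ℝ w₁ w₂ ⊆ frontier Δ) :
    ∃ m : E, IsLatticePoint m ∧ (∀ x ∈ Δ, -1 ≤ dot m x) ∧ dot m w₁ = -1 ∧ dot m w₂ = -1 := by
  have hmid : (1/2 : ℝ) • w₁ + (1/2 : ℝ) • w₂ ∈ segment ℝ w₁ w₂ :=
    ⟨1/2, 1/2, by norm_num⟩
  obtain ⟨m, hmlat, hmge, hmm⟩ := supp h (hseg hmid)
  obtain ⟨S, hSlat, hSeq⟩ := h.1
  have hclosed : IsClosed Δ := hSeq ▸ (S.finite_toSet.isCompact_convexHull ℝ).isClosed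
  have hsubΔ : segment ℝ w₁ w₂ ⊆ Δ := fun x hx => by
    have h1 : x ∈ closure Δ := frontier_subset_closure (hseg hx)
    rwa [hclosed.closure_eq] at h1
  have h1 : -1 ≤ dot m w₁ := hmge _ (hsubΔ (left_mem_segment ℝ w₁ w₂))
  have h2 : -1 ≤ dot m w₂ := hmge _ (hsubΔ (right_mem_segment ℝ w₁ w₂))
  have hcomb : dot m ((1/2 : ℝ) • w₁ + (1/2 : ℝ) • w₂) = (1/2) * dot m w₁ + (1/2) * dot m w₂ := by
    rw [(dot_linear' m).map_add, (dot_linear' m).map_smul, (dot_linear' m).map_smul]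
    simp [smul_eq_mul]
  rw [hcomb] at hmm
  exact ⟨m, hmlat, hmge, by linarith, by linarith⟩

lemma segment_param_latticept {w₁ w₂ : E}
    (hlat : {x ∈ segment ℝ w₁ w₂ | IsLatticePoint x} = {w₁, w₂})
    {θ : ℝ} (h0 : 0 ≤ θ) (h1 : θ ≤ 1)
    (hl : IsLatticePoint ((1-θ) • w₁ + θ • w₂)) :
    (1-θ) • w₁ + θ • w₂ = w₁ ∨ (1-θ) • w₁ + θ • w₂ = w₂ := by
  have hmem : (1-θ) • w₁ + θ • w₂ ∈ {x ∈ segment ℝ w₁ w₂ | IsLatticePoint x} :=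
    ⟨⟨1-θ, θ, by linarith, h0, by ring, rfl⟩, hl⟩
  rw [hlat] at hmem
  exact hmem

lemma edge_det {Δ : Set E} (h : IsReflexive Δ) {w₁ w₂ : E}
    (hw1 : IsLatticePoint w₁) (hw2 : IsLatticePoint w₂) (hwne : w₁ ≠ w₂)
    (hseg : segment ℝ w₁ w₂ ⊆ frontier Δ)
    (hlat : {x ∈ segment ℝ w₁ w₂ | IsLatticePoint x} = {w₁, w₂}) :
    Ddet w₁ w₂ = 1 ∨ Ddet w₁ w₂ = -1 := by
  obtain ⟨m, hmlat, hmge, hm1, hm2⟩ := edge_facet h hseg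
  obtain ⟨a, b, ha, hb⟩ := lat_pair hmlat
  obtain ⟨X0, X1, hX0, hX1⟩ := lat_pair hw1
  obtain ⟨Y0, Y1, hY0, hY1⟩ := lat_pair hw2
  rw [dot_eq, ha, hb, hX0, hX1] at hm1
  rw [dot_eq, ha, hb, hY0, hY1] at hm2
  have hm1' : a * X0 + b * X1 = -1 := by exact_mod_cast hm1
  have hm2' : a * Y0 + b * Y1 = -1 := by exact_mod_cast hm2
  set d0 : ℤ := Y0 - X0 with hd0
  set d1 : ℤ := Y1 - X1 with hd1
  have hdd : a * d0 + b * d1 = 0 := by rw [hd0, hd1]; ring_nf; omega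
  have hcop : IsCoprime a b := ⟨-X0, -X1, by linarith [hm1']⟩
  have hT : ∃ t : ℤ, d0 = -t * b ∧ d1 = t * a := by
    rcases eq_or_ne a 0 with h0 | h0
    · have hbu : IsUnit b := by
        rw [h0] at hcop
        exact (isCoprime_zero_left).1 hcop
      have hb2 : b * b = 1 := by
        rcases Int.isUnit_iff.1 hbu with rfl | rfl <;> norm_num
      have hd10 : d1 = 0 := by
        rw [h0] at hdd
        rcases Int.isUnit_iff.1 hbu with rfl | rfl <;> omega
      exact ⟨-d0 * b, by linear_combination (-d0) * hb2, by rw [h0, hd10]; ring⟩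
    · have hdvd : a ∣ d1 := by
        have h2 : a ∣ b * d1 := ⟨-d0, by linarith [hdd]⟩
        exact hcop.dvd_of_dvd_mul_left h2
      obtain ⟨t, ht⟩ := hdvd
      refine ⟨t, ?_, by rw [ht]; ring⟩
      have h3 : a * (d0 + b * t) = 0 := by rw [ht] at hdd; linear_combination hdd
      have h4 : d0 + b * t = 0 := by
        rcases mul_eq_zero.1 h3 with h5 | h5
        · exact absurd h5 h0
        · exact h5
      linear_combination h4
  obtain ⟨t, htd0, htd1⟩ := hT
  have hwne' : d0 ≠ 0 ∨ d1 ≠ 0 := by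
    by_contra hcon
    push_neg at hcon
    apply hwne
    funext i
    fin_cases i
    · show w₁ 0 = w₂ 0
      rw [hX0, hY0]; norm_cast; omega
    · show w₁ 1 = w₂ 1
      rw [hX1, hY1]; norm_cast; omega
  have ht0 : t ≠ 0 := by
    rintro rfl
    simp at htd0 htd1
    rcases hwne' with h' | h' <;> [exact h' htd0; exact h' htd1]
  -- rule out |t| ≥ 2
  have habs : t = 1 ∨ t = -1 := by
    by_contra hcon
    push_neg at hcon
    have h2t : 2 ≤ t ∨ t ≤ -2 := by omega
    -- construct intermediate lattice point
    have key : ∀ θ : ℝ, 0 < θ → θ < 1 → IsLatticePoint ((1-θ) • w₁ + θ • w₂) → False := by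
      intro θ hθ0 hθ1 hlp
      have hcoord : w₂ 0 = w₁ 0 ∧ w₂ 1 = w₁ 1 := by
        rcases segment_param_latticept hlat hθ0.le hθ1.le hlp with he | he
        · constructor
          · have h' := congrFun he 0
            simp only [Pi.add_apply, Pi.smul_apply, smul_eq_mul] at h'
            have e0 : θ * (w₂ 0 - w₁ 0) = 0 := by linear_combination h'
            rcases mul_eq_zero.1 e0 with h'' | h''
            · exact absurd h'' hθ0.ne'
            · exact sub_eq_zero.1 h''
          · have h' := congrFun he 1
            simp only [Pi.add_apply, Pi.smul_apply, smul_eq_mul] at h'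
            have e0 : θ * (w₂ 1 - w₁ 1) = 0 := by linear_combination h'
            rcases mul_eq_zero.1 e0 with h'' | h''
            · exact absurd h'' hθ0.ne'
            · exact sub_eq_zero.1 h''
        · constructor
          · have h' := congrFun he 0
            simp only [Pi.add_apply, Pi.smul_apply, smul_eq_mul] at h'
            have e0 : (1 - θ) * (w₂ 0 - w₁ 0) = 0 := by linear_combination -h'
            rcases mul_eq_zero.1 e0 with h'' | h''
            · exact absurd h'' (by linarith)
            · exact sub_eq_zero.1 h''
          · have h' := congrFun he 1
            simp only [Pi.add_apply, Pi.smul_apply, smul_eq_mul] at h'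
            have e0 : (1 - θ) * (w₂ 1 - w₁ 1) = 0 := by linear_combination -h'
            rcases mul_eq_zero.1 e0 with h'' | h''
            · exact absurd h'' (by linarith)
            · exact sub_eq_zero.1 h''
      obtain ⟨e0, e1⟩ := hcoord
      rw [hX0, hY0] at e0; rw [hX1, hY1] at e1
      have hc0 : d0 = 0 := by rw [hd0]; exact_mod_cast sub_eq_zero.2 e0
      have hc1 : d1 = 0 := by rw [hd1]; exact_mod_cast sub_eq_zero.2 e1
      rcases hwne' with h' | h' <;> [exact h' hc0; exact h' hc1]
    have key2 : ∀ (u c0 c1 : ℤ), 2 ≤ u → Y0 = X0 + u * c0 → Y1 = X1 + u * c1 → False := by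
      intro u c0 c1 hu h0' h1'
      have huR : (2:ℝ) ≤ (u:ℝ) := by exact_mod_cast hu
      have hupos : (0:ℝ) < (u:ℝ) := by linarith
      apply key (1/(u:ℝ)) (one_div_pos.2 hupos) (by rw [div_lt_one hupos]; linarith)
      intro i
      have hY0R : (Y0:ℝ) = (X0:ℝ) + (u:ℝ) * (c0:ℝ) := by exact_mod_cast h0'
      have hY1R : (Y1:ℝ) = (X1:ℝ) + (u:ℝ) * (c1:ℝ) := by exact_mod_cast h1'
      fin_cases i
      · refine ⟨X0 + c0, ?_⟩
        simp only [Pi.add_apply, Pi.smul_apply, smul_eq_mul, Fin.mk_zero, Fin.mk_one, Fin.isValue]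
        rw [hX0, hY0, hY0R]
        push_cast
        field_simp
        ring
      · refine ⟨X1 + c1, ?_⟩
        simp only [Pi.add_apply, Pi.smul_apply, smul_eq_mul, Fin.mk_zero, Fin.mk_one, Fin.isValue]
        rw [hX1, hY1, hY1R]
        push_cast
        field_simp
        ring
    rcases h2t with hge | hle
    · exact key2 t (-b) a hge (by linear_combination htd0 - hd0) (by linear_combination htd1 - hd1)
    · exact key2 (-t) b (-a) (by omega) (by linear_combination htd0 - hd0)
        (by linear_combination htd1 - hd1)
  -- compute determinant
  have hY0' : Y0 = X0 + (-t * b) := by omega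
  have hY1' : Y1 = X1 + t * a := by omega
  have hm1R : (a:ℝ) * (X0:ℝ) + (b:ℝ) * (X1:ℝ) = -1 := by exact_mod_cast hm1'
  have hdet : Ddet w₁ w₂ = ((-t : ℤ) : ℝ) := by
    rw [Ddet, hX0, hX1, hY0, hY1, hY0', hY1']
    push_cast
    linear_combination (t:ℝ) * hm1R
  rcases habs with rfl | rfl
  · right; rw [hdet]; norm_num
  · left; rw [hdet]; norm_num

lemma Ddet_skew (x y : E) : Ddet x y = -Ddet y x := by simp only [Ddet]; ring

lemma Ddet_zero_right (x : E) : Ddet x 0 = 0 := by simp [Ddet]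

lemma Ddet_zero_left (x : E) : Ddet 0 x = 0 := by simp [Ddet]

lemma Ddet_combo (v₁ v₂ : E) (a b : ℝ) : Ddet v₁ (a • v₁ + b • v₂) = b * Ddet v₁ v₂ := by
  simp only [Ddet, Pi.add_apply, Pi.smul_apply, smul_eq_mul]; ring

lemma Ddet_combo' (v₁ v₂ : E) (a b : ℝ) : Ddet (a • v₁ + b • v₂) v₂ = a * Ddet v₁ v₂ := by
  simp only [Ddet, Pi.add_apply, Pi.smul_apply, smul_eq_mul]; ring

lemma sum_sq_pos {u : E} (hu : u ≠ 0) : 0 < u 0 * u 0 + u 1 * u 1 := by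
  have h : u 0 ≠ 0 ∨ u 1 ≠ 0 := by
    by_contra hc
    push_neg at hc
    apply hu
    funext i
    fin_cases i
    · show u 0 = 0; exact hc.1
    · show u 1 = 0; exact hc.2
  rcases h with h | h <;> nlinarith [mul_self_nonneg (u 0), mul_self_nonneg (u 1),
    mul_self_pos.2 h]

lemma exists_Ddet_right_pos {u : E} (hu : u ≠ 0) : ∃ x₀ : E, 0 < Ddet x₀ u := by
  refine ⟨![u 1, -(u 0)], ?_⟩
  have h := sum_sq_pos hu
  simp only [Ddet, Matrix.cons_val_zero, Matrix.cons_val_one, Matrix.head_cons]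
  nlinarith

lemma exists_Ddet_left_pos {u : E} (hu : u ≠ 0) : ∃ x₀ : E, 0 < Ddet u x₀ := by
  refine ⟨![-(u 1), u 0], ?_⟩
  have h := sum_sq_pos hu
  simp only [Ddet, Matrix.cons_val_zero, Matrix.cons_val_one, Matrix.head_cons]
  nlinarith

lemma combo_mem {Δ : Set E} (hconv : Convex ℝ Δ) {v₁ v₂ : E} (h1 : v₁ ∈ Δ) (h2 : v₂ ∈ Δ)
    (h0 : (0:E) ∈ Δ) {a b : ℝ} (ha : 0 ≤ a) (hb : 0 ≤ b) (hab : a + b ≤ 1) :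
    a • v₁ + b • v₂ ∈ Δ := by
  rcases eq_or_lt_of_le (add_nonneg ha hb) with hz | hpos
  · have ha0 : a = 0 := by linarith
    have hb0 : b = 0 := by linarith
    rw [ha0, hb0, zero_smul, zero_smul, add_zero]
    exact h0
  · have hy : (a/(a+b)) • v₁ + (b/(a+b)) • v₂ ∈ Δ :=
      hconv h1 h2 (div_nonneg ha hpos.le) (div_nonneg hb hpos.le) (by field_simp)
    have hfin : (a+b) • ((a/(a+b)) • v₁ + (b/(a+b)) • v₂) + (1-(a+b)) • (0:E) ∈ Δ :=
      hconv hy h0 hpos.le (by linarith) (by ring)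
    have heq : (a+b) • ((a/(a+b)) • v₁ + (b/(a+b)) • v₂) + (1-(a+b)) • (0:E)
        = a • v₁ + b • v₂ := by
      funext i
      simp only [Pi.add_apply, Pi.smul_apply, smul_eq_mul, Pi.zero_apply, mul_zero, add_zero]
      field_simp
    rwa [heq] at hfin

lemma interior_perturb {A : Set E} {z : E} (x₀ : E) (hz : z ∈ interior A) :
    ∃ t : ℝ, 0 < t ∧ z + t • x₀ ∈ A := by
  have hcont : ContinuousAt (fun t : ℝ => z + t • x₀) 0 :=
    (continuous_const.add (continuous_id.smul continuous_const)).continuousAt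
  have hmem : interior A ∈ nhds ((fun t : ℝ => z + t • x₀) 0) := by
    simp only [zero_smul, add_zero]
    exact isOpen_interior.mem_nhds hz
  obtain ⟨ε, hε, hball⟩ := Metric.mem_nhds_iff.1 (hcont.preimage_mem_nhds hmem)
  refine ⟨ε/2, by linarith, ?_⟩
  have hmem2 : (ε/2 : ℝ) ∈ Metric.ball (0:ℝ) ε := by
    simp only [Metric.mem_ball, Real.dist_eq, sub_zero]
    rw [abs_of_pos (by linarith)]; linarith
  exact interior_subset (hball hmem2)

lemma main' {Δ₁ Δ₂ : Set E} (h1 : IsReflexive Δ₁) (h2 : IsReflexive Δ₂)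
    (hsub : Δ₁ ⊆ Δ₂) {w₁ w₂ : E} (hw1 : IsLatticePoint w₁) (hw2 : IsLatticePoint w₂)
    (hdet : Ddet w₁ w₂ = 1)
    (m : E) (hmlat : IsLatticePoint m) (hmge : ∀ x ∈ Δ₂, -1 ≤ dot m x)
    (hm1 : dot m w₁ = -1) (hm2 : dot m w₂ = -1) :
    ∃ v₁ v₂ : E, IsLatticePoint v₁ ∧ IsLatticePoint v₂ ∧ v₁ ≠ v₂ ∧
      segment ℝ v₁ v₂ ⊆ frontier Δ₁ ∧
      {x ∈ segment ℝ v₁ v₂ | IsLatticePoint x} = {v₁, v₂} ∧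
      coneOver2 w₁ w₂ ⊆ coneOver2 v₁ v₂ := by
  obtain ⟨S₁, hS₁lat, hS₁eq⟩ := h1.1
  have hΔ₁conv : Convex ℝ Δ₁ := hS₁eq ▸ convex_convexHull ℝ _
  have hΔ₁comp : IsCompact Δ₁ := hS₁eq ▸ S₁.finite_toSet.isCompact_convexHull ℝ
  have hΔ₁closed : IsClosed Δ₁ := hΔ₁comp.isClosed
  have h0₁ : (0:E) ∈ interior Δ₁ := h1.2.1
  have h0Δ₁ : (0:E) ∈ Δ₁ := interior_subset h0₁
  have hS₁sub : ∀ s ∈ S₁, s ∈ Δ₁ := fun s hs => hS₁eq ▸ subset_convexHull ℝ (S₁ : Set E) hs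
  have hplk : ∀ x y : E, Ddet x y = Ddet x w₂ * Ddet w₁ y - Ddet w₁ x * Ddet y w₂ := by
    intro x y
    have h := pluecker w₁ w₂ x y
    rwa [hdet, mul_one] at h
  have hF3 : ∀ v : E, v ∈ Δ₂ → IsLatticePoint v → 1 ≤ Ddet v w₂ → 1 ≤ Ddet w₁ v → False := by
    intro v hvΔ hvlat hA1 hB1
    have hvd := cramer1 hdet v
    have hdotv : dot m v = Ddet v w₂ * dot m w₁ + Ddet w₁ v * dot m w₂ := by
      conv_lhs => rw [hvd]
      rw [(dot_linear' m).map_add, (dot_linear' m).map_smul, (dot_linear' m).map_smul]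
      simp [smul_eq_mul]
    rw [hm1, hm2] at hdotv
    have hge := hmge v hvΔ
    rw [hdotv] at hge
    nlinarith
  set L : Set E := {v | v ∈ Δ₁ ∧ IsLatticePoint v ∧ v ≠ 0} with hLdef
  have hLfin : L.Finite := by
    apply (finite_lattice hΔ₁comp.isBounded).subset
    rintro v ⟨hv1, hv2, _⟩
    exact ⟨hv1, hv2⟩
  have hF5 : ∀ p : E, IsLatticePoint p → p ∈ interior Δ₂ → p = 0 := fun p hp hint =>
    interior_lattice_eq_zero h2 hp hint
  have hscale : ∀ v : E, v ∈ Δ₁ → ∀ c : ℝ, 0 ≤ c → c < 1 → c • v ∈ interior Δ₁ := by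
    intro v hv c hc0 hc1
    have h := hΔ₁conv.combo_interior_self_mem_interior (x := 0) (y := v) h0₁ hv
      (a := 1 - c) (b := c) (by linarith) hc0 (by ring)
    rwa [smul_zero, zero_add] at h
  have hnotint : ∀ v ∈ L, v ∉ interior Δ₁ := by
    rintro v ⟨hvΔ, hvlat, hvne⟩ hint
    exact hvne (hF5 v hvlat (interior_mono hsub hint))
  have hrayext : ∀ v ∈ L, ∀ c : ℝ, 0 < c → c < 1 → c • v ∉ L := by
    intro v hvL c hc0 hc1 hcL
    exact hnotint _ hcL (hscale v hvL.1 c hc0.le hc1)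
  have hw2ne : w₂ ≠ 0 := by
    rintro rfl
    rw [Ddet_zero_right] at hdet
    norm_num at hdet
  have hw1ne : w₁ ≠ 0 := by
    rintro rfl
    rw [Ddet_zero_left] at hdet
    norm_num at hdet
  set T₁ : Set E := {v | v ∈ L ∧ 0 < Ddet v w₂ ∧ Ddet w₁ v ≤ 0} with hT₁def
  set T₂ : Set E := {v | v ∈ L ∧ 0 < Ddet w₁ v ∧ Ddet v w₂ ≤ 0} with hT₂def
  have hT₁ne : T₁.Nonempty := by
    by_contra hcon
    rw [Set.not_nonempty_iff_eq_empty] at hcon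
    have hle : ∀ x ∈ Δ₁, Ddet x w₂ ≤ 0 := by
      intro x hx
      rw [hS₁eq] at hx
      refine hull_le (Ddet_linear' w₂) ?_ x hx
      intro s hs
      by_contra hpos
      push_neg at hpos
      have hsΔ : s ∈ Δ₁ := hS₁sub s hs
      have hslat := hS₁lat s hs
      have hsne : s ≠ 0 := by
        rintro rfl
        rw [Ddet_zero_left] at hpos
        exact lt_irrefl _ hpos
      have hsL : s ∈ L := ⟨hsΔ, hslat, hsne⟩
      rcases le_or_gt (Ddet w₁ s) 0 with hB0 | hB0
      · have hsT : s ∈ T₁ := ⟨hsL, hpos, hB0⟩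
        rw [hcon] at hsT
        exact hsT
      · exact hF3 s (hsub hsΔ) hslat (int_one_le (Ddet_int hslat hw2) hpos)
          (int_one_le (Ddet_int hw1 hslat) hB0)
    obtain ⟨x₀, hx₀⟩ := exists_Ddet_right_pos hw2ne
    exact pos_span h0₁ (Ddet_linear' w₂) x₀ hx₀ hle
  have hT₂ne : T₂.Nonempty := by
    by_contra hcon
    rw [Set.not_nonempty_iff_eq_empty] at hcon
    have hle : ∀ x ∈ Δ₁, Ddet w₁ x ≤ 0 := by
      intro x hx
      rw [hS₁eq] at hx
      refine hull_le (Ddet_linear w₁) ?_ x hx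
      intro s hs
      by_contra hpos
      push_neg at hpos
      have hsΔ : s ∈ Δ₁ := hS₁sub s hs
      have hslat := hS₁lat s hs
      have hsne : s ≠ 0 := by
        rintro rfl
        rw [Ddet_zero_right] at hpos
        exact lt_irrefl _ hpos
      have hsL : s ∈ L := ⟨hsΔ, hslat, hsne⟩
      rcases le_or_gt (Ddet s w₂) 0 with hA0 | hA0
      · have hsT : s ∈ T₂ := ⟨hsL, hpos, hA0⟩
        rw [hcon] at hsT
        exact hsT
      · exact hF3 s (hsub hsΔ) hslat (int_one_le (Ddet_int hslat hw2) hA0)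
          (int_one_le (Ddet_int hw1 hslat) hpos)
    obtain ⟨x₀, hx₀⟩ := exists_Ddet_left_pos hw1ne
    exact pos_span h0₁ (Ddet_linear w₁) x₀ hx₀ hle
  have hT₁fin : T₁.Finite := hLfin.subset (fun v hv => hv.1)
  have hT₂fin : T₂.Finite := hLfin.subset (fun v hv => hv.1)
  obtain ⟨v₁, hv₁T, hv₁max⟩ :=
    Set.exists_max_image T₁ (fun v => Ddet w₁ v / Ddet v w₂) hT₁fin hT₁ne
  obtain ⟨v₂, hv₂T, hv₂max⟩ :=
    Set.exists_max_image T₂ (fun v => Ddet v w₂ / Ddet w₁ v) hT₂fin hT₂ne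
  have hv₁L : v₁ ∈ L := hv₁T.1
  have hv₂L : v₂ ∈ L := hv₂T.1
  have hA₁pos : 0 < Ddet v₁ w₂ := hv₁T.2.1
  have hB₁np : Ddet w₁ v₁ ≤ 0 := hv₁T.2.2
  have hB₂pos : 0 < Ddet w₁ v₂ := hv₂T.2.1
  have hA₂np : Ddet v₂ w₂ ≤ 0 := hv₂T.2.2
  have hv₁Δ : v₁ ∈ Δ₁ := hv₁L.1
  have hv₂Δ : v₂ ∈ Δ₁ := hv₂L.1
  have hv₁lat : IsLatticePoint v₁ := hv₁L.2.1
  have hv₂lat : IsLatticePoint v₂ := hv₂L.2.1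
  have hv₁ne : v₁ ≠ 0 := hv₁L.2.2
  have hmax₁ : ∀ v ∈ T₁, Ddet v₁ v ≤ 0 := by
    intro v hv
    have h' := hv₁max v hv
    rw [div_le_div_iff₀ hv.2.1 hA₁pos] at h'
    rw [hplk v₁ v]
    nlinarith [h']
  have hmax₂ : ∀ v ∈ T₂, Ddet v v₂ ≤ 0 := by
    intro v hv
    have h' := hv₂max v hv
    rw [div_le_div_iff₀ hv.2.1 hB₂pos] at h'
    rw [hplk v v₂]
    nlinarith [h']
  have hCORE : ∀ q, q ∈ L → 0 < Ddet v₁ q → 0 < Ddet q v₂ → False := by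
    intro q hqL hq1 hq2
    have hqlat : IsLatticePoint q := hqL.2.1
    rcases le_or_gt (Ddet q w₂) 0 with hAq | hAq
    · rcases le_or_gt (Ddet w₁ q) 0 with hBq | hBq
      · rw [hplk v₁ q] at hq1
        nlinarith [mul_nonneg hA₁pos.le (neg_nonneg.2 hBq),
          mul_nonneg (neg_nonneg.2 hB₁np) (neg_nonneg.2 hAq)]
      · exact absurd (hmax₂ q ⟨hqL, hBq, hAq⟩) (by linarith)
    · rcases le_or_gt (Ddet w₁ q) 0 with hBq | hBq
      · exact absurd (hmax₁ q ⟨hqL, hAq, hBq⟩) (by linarith)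
      · exact hF3 q (hsub hqL.1) hqlat (int_one_le (Ddet_int hqlat hw2) hAq)
          (int_one_le (Ddet_int hw1 hqlat) hBq)
  have hDpos : 0 < Ddet v₁ v₂ := by
    by_contra hcon
    push_neg at hcon
    have hle : ∀ x ∈ Δ₁, Ddet v₁ x ≤ 0 := by
      intro x hx
      rw [hS₁eq] at hx
      refine hull_le (Ddet_linear v₁) ?_ x hx
      intro s hs
      by_contra hpos
      push_neg at hpos
      have hsΔ : s ∈ Δ₁ := hS₁sub s hs
      have hslat := hS₁lat s hs
      have hsne : s ≠ 0 := by
        rintro rfl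
        rw [Ddet_zero_right] at hpos
        exact lt_irrefl _ hpos
      have hsL : s ∈ L := ⟨hsΔ, hslat, hsne⟩
      rcases le_or_gt (Ddet s w₂) 0 with hAs | hAs
      · rcases le_or_gt (Ddet w₁ s) 0 with hBs | hBs
        · rw [hplk v₁ s] at hpos
          nlinarith [mul_nonneg hA₁pos.le (neg_nonneg.2 hBs),
            mul_nonneg (neg_nonneg.2 hB₁np) (neg_nonneg.2 hAs)]
        · have hsT₂ : s ∈ T₂ := ⟨hsL, hBs, hAs⟩
          have e1 : 0 < Ddet v₁ w₂ * Ddet w₁ s - Ddet w₁ v₁ * Ddet s w₂ := by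
            rw [hplk v₁ s] at hpos
            linarith
          have e2 : Ddet v₁ w₂ * Ddet w₁ v₂ - Ddet w₁ v₁ * Ddet v₂ w₂ ≤ 0 := by
            rw [hplk v₁ v₂] at hcon
            linarith
          have e3 : Ddet s w₂ * Ddet w₁ v₂ - Ddet w₁ s * Ddet v₂ w₂ ≤ 0 := by
            have h4 := hmax₂ s hsT₂
            rw [hplk s v₂] at h4
            linarith
          nlinarith [mul_pos hB₂pos e1, mul_nonneg hBs.le (neg_nonneg.2 e2),
            mul_nonneg (neg_nonneg.2 hB₁np) (neg_nonneg.2 e3)]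
      · rcases le_or_gt (Ddet w₁ s) 0 with hBs | hBs
        · exact absurd (hmax₁ s ⟨hsL, hAs, hBs⟩) (by linarith)
        · exact hF3 s (hsub hsΔ) hslat (int_one_le (Ddet_int hslat hw2) hAs)
            (int_one_le (Ddet_int hw1 hslat) hBs)
    obtain ⟨x₀, hx₀⟩ := exists_Ddet_left_pos hv₁ne
    exact pos_span h0₁ (Ddet_linear v₁) x₀ hx₀ hle
  have hNz := Ddet_int hv₁lat hv₂lat
  have hN1 : Ddet v₁ v₂ = 1 := by
    by_contra hne1
    have hN2 : (2:ℝ) ≤ Ddet v₁ v₂ := by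
      obtain ⟨z, hz⟩ := hNz
      rw [hz] at hDpos hne1 ⊢
      have hz1 : 0 < z := by exact_mod_cast hDpos
      have hz2 : z ≠ 1 := fun h => hne1 (by rw [h]; norm_num)
      have : 2 ≤ z := by omega
      exact_mod_cast this
    have hxex : ∃ x : E, IsLatticePoint x ∧ ¬ ∃ a b : ℤ, x = (a:ℝ) • v₁ + (b:ℝ) • v₂ := by
      by_contra hcon
      push_neg at hcon
      have he₀ : IsLatticePoint (![1,0] : E) := by
        intro i
        fin_cases i
        · exact ⟨1, by simp⟩
        · exact ⟨0, by simp⟩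
      have he₁ : IsLatticePoint (![0,1] : E) := by
        intro i
        fin_cases i
        · exact ⟨0, by simp⟩
        · exact ⟨1, by simp⟩
      obtain ⟨a, b, hab⟩ := hcon ![1,0] he₀
      obtain ⟨c, d, hcd⟩ := hcon ![0,1] he₁
      have hdet01 : Ddet ![1,0] ![0,1] = 1 := by norm_num [Ddet]
      rw [hab, hcd] at hdet01
      have hexp : Ddet ((a:ℝ)•v₁+(b:ℝ)•v₂) ((c:ℝ)•v₁+(d:ℝ)•v₂)
          = ((a:ℝ)*(d:ℝ)-(b:ℝ)*(c:ℝ)) * Ddet v₁ v₂ := by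
        simp only [Ddet, Pi.add_apply, Pi.smul_apply, smul_eq_mul]
        ring
      rw [hexp] at hdet01
      obtain ⟨z, hz⟩ := hNz
      rw [hz] at hdet01 hN2
      have hz2 : 2 ≤ z := by exact_mod_cast hN2
      have hint : (a*d - b*c) * z = 1 := by exact_mod_cast hdet01
      have hdvd : z ∣ 1 := ⟨a*d-b*c, by linear_combination -hint⟩
      have := Int.le_of_dvd one_pos hdvd
      omega
    obtain ⟨x, hxlat, hxnr⟩ := hxex
    have hN0 : Ddet v₁ v₂ ≠ 0 := by linarith
    set r : ℝ := Ddet x v₂ / Ddet v₁ v₂ with hrdef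
    set s : ℝ := Ddet v₁ x / Ddet v₁ v₂ with hsdef
    have hxrs : x = r • v₁ + s • v₂ := by
      have h := cramer v₁ v₂ x
      funext i
      have h2 := congrFun h i
      simp only [Pi.add_apply, Pi.smul_apply, smul_eq_mul] at h2 ⊢
      rw [hrdef, hsdef]
      field_simp
      linarith [h2]
    have hq : x - (⌊r⌋:ℝ) • v₁ - (⌊s⌋:ℝ) • v₂ = Int.fract r • v₁ + Int.fract s • v₂ := by
      funext i
      have h2 := congrFun hxrs i
      simp only [Pi.add_apply, Pi.smul_apply, smul_eq_mul] at h2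
      simp only [Pi.sub_apply, Pi.add_apply, Pi.smul_apply, smul_eq_mul, Int.fract]
      rw [h2]
      ring
    have hqlat : IsLatticePoint (Int.fract r • v₁ + Int.fract s • v₂) := by
      rw [← hq]
      have h1 : x - (⌊r⌋:ℝ) • v₁ - (⌊s⌋:ℝ) • v₂
          = x + ((-⌊r⌋ : ℤ):ℝ) • v₁ + ((-⌊s⌋ : ℤ):ℝ) • v₂ := by
        funext i
        simp only [Pi.add_apply, Pi.sub_apply, Pi.smul_apply, smul_eq_mul]
        push_cast
        ring
      rw [h1]
      exact lat_add (lat_add hxlat (lat_zsmul _ hv₁lat)) (lat_zsmul _ hv₂lat)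
    have hfne : ¬ (Int.fract r = 0 ∧ Int.fract s = 0) := by
      rintro ⟨hfa, hfb⟩
      apply hxnr
      refine ⟨⌊r⌋, ⌊s⌋, ?_⟩
      have hra : r = (⌊r⌋:ℝ) := by
        have := Int.fract r
        rw [Int.fract] at hfa
        linarith [hfa]
      have hsb : s = (⌊s⌋:ℝ) := by
        rw [Int.fract] at hfb
        linarith [hfb]
      rw [hxrs, ← hra, ← hsb]
    obtain ⟨q, ga, gb, hqeq, hqlat', hga0, hgb0, hgab, hga1, hgb1, hgne⟩ :
        ∃ (q : E) (ga gb : ℝ), q = ga • v₁ + gb • v₂ ∧ IsLatticePoint q ∧ 0 ≤ ga ∧ 0 ≤ gb ∧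
          ga + gb ≤ 1 ∧ ga < 1 ∧ gb < 1 ∧ ¬(ga = 0 ∧ gb = 0) := by
      have hfa0 : 0 ≤ Int.fract r := Int.fract_nonneg r
      have hfb0 : 0 ≤ Int.fract s := Int.fract_nonneg s
      have hfa1 : Int.fract r < 1 := Int.fract_lt_one r
      have hfb1 : Int.fract s < 1 := Int.fract_lt_one s
      rcases le_or_gt (Int.fract r + Int.fract s) 1 with hle1 | hgt1
      · exact ⟨_, _, _, rfl, hqlat, hfa0, hfb0, hle1, hfa1, hfb1, hfne⟩
      · refine ⟨(1-Int.fract r) • v₁ + (1-Int.fract s) • v₂, 1-Int.fract r, 1-Int.fract s,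
          rfl, ?_, by linarith, by linarith, by linarith, by linarith, by linarith,
          by rintro ⟨h1', h2'⟩; linarith⟩
        have heq2 : (1-Int.fract r) • v₁ + (1-Int.fract s) • v₂
            = v₁ + v₂ + ((-1 : ℤ):ℝ) • (Int.fract r • v₁ + Int.fract s • v₂) := by
          funext i
          simp only [Pi.add_apply, Pi.smul_apply, smul_eq_mul]
          push_cast
          ring
        rw [heq2]
        exact lat_add (lat_add hv₁lat hv₂lat) (lat_zsmul _ hqlat)
    have hqΔ : q ∈ Δ₁ := by
      rw [hqeq]
      exact combo_mem hΔ₁conv hv₁Δ hv₂Δ h0Δ₁ hga0 hgb0 hgab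
    have hDq1 : Ddet v₁ q = gb * Ddet v₁ v₂ := by rw [hqeq]; exact Ddet_combo v₁ v₂ ga gb
    have hDq2 : Ddet q v₂ = ga * Ddet v₁ v₂ := by rw [hqeq]; exact Ddet_combo' v₁ v₂ ga gb
    have hqne : q ≠ 0 := by
      rintro rfl
      rw [Ddet_zero_right] at hDq1
      rw [Ddet_zero_left] at hDq2
      have hgb : gb = 0 := by
        rcases mul_eq_zero.1 hDq1.symm with h | h
        · exact h
        · exact absurd h hN0
      have hga : ga = 0 := by
        rcases mul_eq_zero.1 hDq2.symm with h | h
        · exact h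
        · exact absurd h hN0
      exact hgne ⟨hga, hgb⟩
    have hqL : q ∈ L := ⟨hqΔ, hqlat', hqne⟩
    rcases eq_or_lt_of_le hga0 with hga | hga
    · have hgbpos : 0 < gb := by
        rcases eq_or_lt_of_le hgb0 with h | h
        · exact absurd ⟨hga.symm, h.symm⟩ hgne
        · exact h
      have hq2 : q = gb • v₂ := by rw [hqeq, ← hga, zero_smul, zero_add]
      exact hrayext v₂ hv₂L gb hgbpos hgb1 (hq2 ▸ hqL)
    · rcases eq_or_lt_of_le hgb0 with hgb | hgb
      · have hq2 : q = ga • v₁ := by rw [hqeq, ← hgb, zero_smul, add_zero]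
        exact hrayext v₁ hv₁L ga hga hga1 (hq2 ▸ hqL)
      · exact hCORE q hqL (by rw [hDq1]; exact mul_pos hgb hDpos)
          (by rw [hDq2]; exact mul_pos hga hDpos)
  -- the boundary functional g
  have hglin : IsLinearMap ℝ (fun x => Ddet x v₂ + Ddet v₁ x) := by
    constructor <;> intros <;>
      simp only [Ddet, Pi.add_apply, Pi.smul_apply, smul_eq_mul] <;> ring
  have hg1 : ∀ x ∈ Δ₁, Ddet x v₂ + Ddet v₁ x ≤ 1 := by
    intro x hx
    rw [hS₁eq] at hx
    refine hull_le hglin ?_ x hx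
    intro s hs
    show Ddet s v₂ + Ddet v₁ s ≤ 1
    by_contra hgt
    push_neg at hgt
    have hsΔ := hS₁sub s hs
    have hslat := hS₁lat s hs
    have hsne : s ≠ 0 := by
      rintro rfl
      rw [Ddet_zero_left, Ddet_zero_right] at hgt
      norm_num at hgt
    have hsL : s ∈ L := ⟨hsΔ, hslat, hsne⟩
    have hgint : ∃ z : ℤ, Ddet s v₂ + Ddet v₁ s = (z:ℝ) := by
      obtain ⟨z1, h1'⟩ := Ddet_int hslat hv₂lat
      obtain ⟨z2, h2'⟩ := Ddet_int hv₁lat hslat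
      exact ⟨z1 + z2, by rw [h1', h2']; push_cast; ring⟩
    have hg2 : 2 ≤ Ddet s v₂ + Ddet v₁ s := int_two_le hgint hgt
    have hsrep : s = Ddet s v₂ • v₁ + Ddet v₁ s • v₂ := cramer1 hN1 s
    rcases le_or_gt (Ddet s v₂) 0 with hc0 | hc0
    · have hd2 : 0 < Ddet v₁ s := by linarith
      have h1c : 0 < 1 - Ddet s v₂ := by linarith
      have hxΔ : (1/(1-Ddet s v₂)) • s + (1 - 1/(1-Ddet s v₂)) • v₁ ∈ Δ₁ :=
        hΔ₁conv hsΔ hv₁Δ (by positivity)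
          (by rw [sub_nonneg, div_le_one h1c]; linarith) (by ring)
      have hxeq : (1/(1-Ddet s v₂)) • s + (1 - 1/(1-Ddet s v₂)) • v₁
          = (Ddet v₁ s/(1-Ddet s v₂)) • v₂ := by
        funext i
        have h' := congrFun hsrep i
        simp only [Pi.add_apply, Pi.smul_apply, smul_eq_mul] at h' ⊢
        rw [h']
        field_simp
        ring
      rw [hxeq] at hxΔ
      have hv₂i : v₂ ∈ interior Δ₁ := by
        have hh := hscale _ hxΔ ((1-Ddet s v₂)/Ddet v₁ s)
          (le_of_lt (div_pos h1c hd2)) (by rw [div_lt_one hd2]; linarith)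
        have heq3 : ((1-Ddet s v₂)/Ddet v₁ s) • ((Ddet v₁ s/(1-Ddet s v₂)) • v₂) = v₂ := by
          rw [smul_smul]
          have hmul : (1-Ddet s v₂)/Ddet v₁ s * (Ddet v₁ s/(1-Ddet s v₂)) = 1 := by
            field_simp
          rw [hmul, one_smul]
        rwa [heq3] at hh
      exact hnotint v₂ hv₂L hv₂i
    · rcases le_or_gt (Ddet v₁ s) 0 with hd0 | hd0
      · have hc2 : 0 < Ddet s v₂ := hc0
        have h1d : 0 < 1 - Ddet v₁ s := by linarith
        have hxΔ : (1/(1-Ddet v₁ s)) • s + (1 - 1/(1-Ddet v₁ s)) • v₂ ∈ Δ₁ :=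
          hΔ₁conv hsΔ hv₂Δ (by positivity)
            (by rw [sub_nonneg, div_le_one h1d]; linarith) (by ring)
        have hxeq : (1/(1-Ddet v₁ s)) • s + (1 - 1/(1-Ddet v₁ s)) • v₂
            = (Ddet s v₂/(1-Ddet v₁ s)) • v₁ := by
          funext i
          have h' := congrFun hsrep i
          simp only [Pi.add_apply, Pi.smul_apply, smul_eq_mul] at h' ⊢
          rw [h']
          field_simp
          ring
        rw [hxeq] at hxΔ
        have hv₁i : v₁ ∈ interior Δ₁ := by
          have hh := hscale _ hxΔ ((1-Ddet v₁ s)/Ddet s v₂)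
            (le_of_lt (div_pos h1d hc2)) (by rw [div_lt_one hc2]; linarith)
          have heq3 : ((1-Ddet v₁ s)/Ddet s v₂) • ((Ddet s v₂/(1-Ddet v₁ s)) • v₁) = v₁ := by
            rw [smul_smul]
            have hmul : (1-Ddet v₁ s)/Ddet s v₂ * (Ddet s v₂/(1-Ddet v₁ s)) = 1 := by
              field_simp
            rw [hmul, one_smul]
          rwa [heq3] at hh
        exact hnotint v₁ hv₁L hv₁i
      · exact hCORE s hsL hd0 hc0
  refine ⟨v₁, v₂, hv₁lat, hv₂lat, ?_, ?_, ?_, ?_⟩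
  · intro hcontra
    rw [hcontra] at hN1
    have hzero : Ddet v₂ v₂ = 0 := by simp only [Ddet]; ring
    rw [hzero] at hN1
    norm_num at hN1
  · rintro z ⟨a, b, ha, hb, hab, rfl⟩
    have hzΔ : a • v₁ + b • v₂ ∈ Δ₁ := hΔ₁conv hv₁Δ hv₂Δ ha hb hab
    rw [frontier, mem_diff]
    refine ⟨by rw [hΔ₁closed.closure_eq]; exact hzΔ, ?_⟩
    intro hint
    obtain ⟨t, ht0, htmem⟩ := interior_perturb v₁ hint
    have hgz := hg1 _ htmem
    have hgz2 : Ddet (a•v₁+b•v₂ + t•v₁) v₂ + Ddet v₁ (a•v₁+b•v₂ + t•v₁)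
        = (a+b) * Ddet v₁ v₂ + t * Ddet v₁ v₂ := by
      simp only [Ddet, Pi.add_apply, Pi.smul_apply, smul_eq_mul]
      ring
    rw [hgz2, hN1, hab] at hgz
    linarith
  · apply Set.eq_of_subset_of_subset
    · rintro x ⟨⟨a, b, ha, hb, hab, rfl⟩, hxlat2⟩
      have hb' : Ddet v₁ (a•v₁+b•v₂) = b := by rw [Ddet_combo, hN1, mul_one]
      have hbz : ∃ z : ℤ, b = (z:ℝ) := by
        obtain ⟨z, hz⟩ := Ddet_int hv₁lat hxlat2
        exact ⟨z, by rw [← hb']; exact hz⟩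
      rcases int_zero_or_one hbz hb (by linarith) with rfl | rfl
      · have ha1 : a = 1 := by linarith
        rw [ha1, one_smul, zero_smul, add_zero]
        exact Set.mem_insert _ _
      · have ha0 : a = 0 := by linarith
        rw [ha0, zero_smul, one_smul, zero_add]
        exact Set.mem_insert_of_mem _ rfl
    · intro x hx
      rcases hx with h | h
      · rw [h]
        exact ⟨left_mem_segment ℝ v₁ v₂, hv₁lat⟩
      · rw [Set.mem_singleton_iff] at h
        rw [h]
        exact ⟨right_mem_segment ℝ v₁ v₂, hv₂lat⟩
  · rintro x ⟨r', s', hr', hs', rfl⟩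
    have hw₁rep : w₁ = Ddet w₁ v₂ • v₁ + Ddet v₁ w₁ • v₂ := cramer1 hN1 w₁
    have hw₂rep : w₂ = Ddet w₂ v₂ • v₁ + Ddet v₁ w₂ • v₂ := cramer1 hN1 w₂
    refine ⟨r' * Ddet w₁ v₂ + s' * Ddet w₂ v₂, r' * Ddet v₁ w₁ + s' * Ddet v₁ w₂, ?_, ?_, ?_⟩
    · have h2' : 0 ≤ Ddet w₂ v₂ := by rw [Ddet_skew]; linarith
      exact add_nonneg (mul_nonneg hr' hB₂pos.le) (mul_nonneg hs' h2')
    · have h3' : 0 ≤ Ddet v₁ w₁ := by rw [Ddet_skew]; linarith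
      exact add_nonneg (mul_nonneg hr' h3') (mul_nonneg hs' hA₁pos.le)
    · conv_lhs => rw [hw₁rep, hw₂rep]
      funext i
      simp only [Pi.add_apply, Pi.smul_apply, smul_eq_mul]
      ring

end MPCP

/-- For nested two-dimensional reflexive polytopes `Δ₁ ⊆ Δ₂`, every cone over a pair of
adjacent lattice points on a common edge of `Δ₂` is contained in the cone over a pair of
adjacent lattice points on a common edge of `Δ₁`: the unique MPCP subdivision of the face
fan of `Δ₂` refines that of `Δ₁`. -/
theorem mpcp_refinement_dim2
    (Δ₁ Δ₂ : Set (Fin 2 → ℝ)) (h1 : IsReflexive Δ₁) (h2 : IsReflexive Δ₂)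
    (hsub : Δ₁ ⊆ Δ₂)
    (w₁ w₂ : Fin 2 → ℝ) (hw1 : IsLatticePoint w₁) (hw2 : IsLatticePoint w₂)
    (hwne : w₁ ≠ w₂)
    (hseg : segment ℝ w₁ w₂ ⊆ frontier Δ₂)
    (hlat : {x ∈ segment ℝ w₁ w₂ | IsLatticePoint x} = {w₁, w₂}) :
    ∃ v₁ v₂ : Fin 2 → ℝ, IsLatticePoint v₁ ∧ IsLatticePoint v₂ ∧ v₁ ≠ v₂ ∧
      segment ℝ v₁ v₂ ⊆ frontier Δ₁ ∧
      {x ∈ segment ℝ v₁ v₂ | IsLatticePoint x} = {v₁, v₂} ∧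
      coneOver2 w₁ w₂ ⊆ coneOver2 v₁ v₂ := by
  obtain ⟨m, hmlat, hmge, hm1, hm2⟩ := MPCP.edge_facet h2 hseg
  rcases MPCP.edge_det h2 hw1 hw2 hwne hseg hlat with hd | hd
  · exact MPCP.main' h1 h2 hsub hw1 hw2 hd m hmlat hmge hm1 hm2
  · have hd' : MPCP.Ddet w₂ w₁ = 1 := by rw [MPCP.Ddet_skew, hd]; norm_num
    have hseg' : segment ℝ w₂ w₁ ⊆ frontier Δ₂ := by rwa [segment_symm]
    have hlat' : {x ∈ segment ℝ w₂ w₁ | IsLatticePoint x} = {w₂, w₁} := by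
      rw [segment_symm, hlat, Set.pair_comm]
    obtain ⟨v₁, v₂, hl1, hl2, hne, hsg, hlt, hcone⟩ :=
      MPCP.main' h1 h2 hsub hw2 hw1 hd' m hmlat hmge hm2 hm1
    exact ⟨v₁, v₂, hl1, hl2, hne, hsg, hlt, by
      rw [MPCP.coneOver2_comm w₁ w₂]; exact hcone⟩
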